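/- arXiv:1710.02990 — 7 statements merged into one kernel-verified Lean document; each statement's English description precedes it below -/
import Mathlib

section
/- For the function g_θ(y) = 1 - 8/((sqrt((9-y)/(1-y)) + 2)^2 - 1) on [0,1), the r-th iterate satisfies g_θ^{(r)}(y) = 1 - 8/((sqrt((9-y)/(1-y)) + 2r)^2 - 1) for every integer r ≥ 1 and every y in [0,1). -/
open Set

noncomputable def gθ : ℝ → ℝ :=
  fun y => 1 - 8 / ((Real.sqrt ((9 - y) / (1 - y)) + 2) ^ 2 - 1)

lemma gθ_sqrt_ge (y : ℝ) (hy : y ∈ Set.Ico (0 : ℝ) 1) :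
    3 ≤ Real.sqrt ((9 - y) / (1 - y)) := by
  obtain ⟨h0, h1⟩ := hy
  have h : (9 : ℝ) ≤ (9 - y) / (1 - y) := by
    rw [le_div_iff₀ (by linarith)]; linarith
  calc (3 : ℝ) = Real.sqrt 9 := by
        rw [show (9 : ℝ) = 3 ^ 2 by norm_num, Real.sqrt_sq (by norm_num)]
    _ ≤ _ := Real.sqrt_le_sqrt h

lemma gθ_key (y : ℝ) (hy : y ∈ Set.Ico (0 : ℝ) 1) :
    gθ y ∈ Set.Ico (0 : ℝ) 1 ∧
    Real.sqrt ((9 - gθ y) / (1 - gθ y)) = Real.sqrt ((9 - y) / (1 - y)) + 2 := by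
  set s := Real.sqrt ((9 - y) / (1 - y)) with hs
  have h3 : 3 ≤ s := gθ_sqrt_ge y hy
  have hD : (24 : ℝ) ≤ (s + 2) ^ 2 - 1 := by nlinarith
  have hDpos : (0 : ℝ) < (s + 2) ^ 2 - 1 := by linarith
  have hDne : (s + 2) ^ 2 - 1 ≠ 0 := ne_of_gt hDpos
  have hg : gθ y = 1 - 8 / ((s + 2) ^ 2 - 1) := rfl
  have hfrac : 8 / ((s + 2) ^ 2 - 1) ≤ 1 / 3 := by
    rw [div_le_div_iff₀ hDpos (by norm_num)]; linarith
  have hfracpos : 0 < 8 / ((s + 2) ^ 2 - 1) := by positivity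
  refine ⟨⟨by rw [hg]; linarith, by rw [hg]; linarith⟩, ?_⟩
  have hr : (9 - gθ y) / (1 - gθ y) = (s + 2) ^ 2 := by
    rw [hg]; field_simp; ring
  rw [hr, Real.sqrt_sq (by linarith)]

theorem gθ_iterate (r : ℕ) (hr : 1 ≤ r) :
    ∀ y ∈ Set.Ico (0 : ℝ) 1,
      gθ^[r] y = 1 - 8 / ((Real.sqrt ((9 - y) / (1 - y)) + 2 * (r : ℝ)) ^ 2 - 1) := by
  obtain ⟨n, rfl⟩ := Nat.exists_eq_add_of_le hr
  induction n with
  | zero =>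
    intro y hy
    norm_num [Function.iterate_one, gθ]
  | succ n ih =>
    intro y hy
    obtain ⟨hmem, hsq⟩ := gθ_key y hy
    have : gθ^[1 + (n + 1)] y = gθ^[1 + n] (gθ y) := by
      rw [show 1 + (n + 1) = (1 + n) + 1 by ring, Function.iterate_succ_apply]
    rw [this, ih (by omega) (gθ y) hmem, hsq]
    push_cast
    ring_nf
end

section
/- For every integer r ≥ 1, g_θ^{(r)}(0) = 1 - 8/((3+2r)^2 - 1) = r(r+3)/((r+1)(r+2)). -/
lemma gθ_step (x : ℝ) (hx : 0 ≤ x) :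
    gθ (x * (x + 3) / ((x + 1) * (x + 2))) =
      (x + 1) * ((x + 1) + 3) / (((x + 1) + 1) * ((x + 1) + 2)) := by
  have h1 : (x + 1) ≠ 0 := by positivity
  have h2 : (x + 2) ≠ 0 := by positivity
  have h3 : (x + 3) ≠ 0 := by positivity
  have h4 : (x + 4) ≠ 0 := by positivity
  have harg : (9 - x * (x + 3) / ((x + 1) * (x + 2))) /
      (1 - x * (x + 3) / ((x + 1) * (x + 2))) = (2 * x + 3) ^ 2 := by
    have hnum : 1 - x * (x + 3) / ((x + 1) * (x + 2)) = 2 / ((x + 1) * (x + 2)) := by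
      field_simp; ring
    have hnum9 : 9 - x * (x + 3) / ((x + 1) * (x + 2)) =
        2 * (2 * x + 3) ^ 2 / ((x + 1) * (x + 2)) := by
      field_simp; ring
    rw [hnum, hnum9]
    field_simp
  have hsqrt : Real.sqrt ((9 - x * (x + 3) / ((x + 1) * (x + 2))) /
      (1 - x * (x + 3) / ((x + 1) * (x + 2)))) = 2 * x + 3 := by
    rw [harg, Real.sqrt_sq (by linarith)]
  unfold gθ
  rw [hsqrt]
  have hd : (2 * x + 3 + 2) ^ 2 - 1 = 4 * ((x + 2) * (x + 3)) := by ring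
  rw [hd]
  field_simp
  ring

lemma gθ_iter (r : ℕ) :
    gθ^[r] 0 = (r : ℝ) * ((r : ℝ) + 3) / (((r : ℝ) + 1) * ((r : ℝ) + 2)) := by
  induction r with
  | zero => simp
  | succ n ih =>
    rw [Function.iterate_succ_apply', ih, gθ_step (n : ℝ) (Nat.cast_nonneg n)]
    push_cast
    ring_nf

theorem gθ_iterate_zero (r : ℕ) (hr : 1 ≤ r) :
    gθ^[r] 0 = 1 - 8 / ((3 + 2 * (r : ℝ)) ^ 2 - 1) ∧
    gθ^[r] 0 = (r : ℝ) * ((r : ℝ) + 3) / (((r : ℝ) + 1) * ((r : ℝ) + 2)) := by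
  have h := gθ_iter r
  refine ⟨?_, h⟩
  rw [h]
  have h1 : ((r : ℝ) + 1) ≠ 0 := by positivity
  have h2 : ((r : ℝ) + 2) ≠ 0 := by positivity
  have hd : (3 + 2 * (r : ℝ)) ^ 2 - 1 = 4 * (((r : ℝ) + 1) * ((r : ℝ) + 2)) := by ring
  rw [hd]
  field_simp
  ring
end

section
/- The derivative of g_θ at 1 equals 1; i.e., the offspring distribution θ is critical: lim_{y→1⁻} (1 - g_θ(y))/(1 - y) = 1. -/
open Filter Set

theorem gθ_critical :
    Tendsto (fun y => (1 - gθ y) / (1 - y)) (nhdsWithin 1 (Set.Iio (1 : ℝ)))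
      (nhds 1) := by
  have key : ∀ y ∈ Set.Iio (1:ℝ),
      (1 - gθ y) / (1 - y) =
        8 / ((9 - y) + 4 * Real.sqrt ((9 - y) * (1 - y)) + 3 * (1 - y)) := by
    intro y hy
    have h1 : (0:ℝ) < 1 - y := by simp only [Set.mem_Iio] at hy; linarith
    have h9 : (0:ℝ) < 9 - y := by linarith
    set s := Real.sqrt ((9 - y) / (1 - y)) with hs
    have hs2 : s ^ 2 = (9 - y) / (1 - y) := Real.sq_sqrt (by positivity)
    have hsnn : 0 ≤ s := Real.sqrt_nonneg _
    have hpos : 0 < (s + 2) ^ 2 - 1 := by nlinarith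
    have hsy : s * (1 - y) = Real.sqrt ((9 - y) * (1 - y)) := by
      rw [hs, ← Real.sqrt_sq h1.le, ← Real.sqrt_mul (by positivity)]
      congr 1
      field_simp
      ring_nf
      rw [Real.sq_sqrt (by nlinarith)]
    have hg : 1 - gθ y = 8 / ((s + 2) ^ 2 - 1) := by
      simp only [gθ, ← hs]; ring
    rw [hg, div_div]
    congr 1
    have hexp : ((s + 2) ^ 2 - 1) * (1 - y)
        = s ^ 2 * (1 - y) + 4 * (s * (1 - y)) + 3 * (1 - y) := by ring
    rw [hexp, hs2, hsy]
    field_simp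
  have hcont : Tendsto
      (fun y : ℝ => (9 - y) + 4 * Real.sqrt ((9 - y) * (1 - y)) + 3 * (1 - y))
      (nhds 1) (nhds 8) := by
    have hc : ContinuousAt
        (fun y : ℝ => (9 - y) + 4 * Real.sqrt ((9 - y) * (1 - y)) + 3 * (1 - y)) 1 := by
      fun_prop
    have := hc.tendsto
    norm_num at this
    exact this
  have hlim : Tendsto (fun y : ℝ =>
      8 / ((9 - y) + 4 * Real.sqrt ((9 - y) * (1 - y)) + 3 * (1 - y)))
      (nhdsWithin 1 (Set.Iio (1:ℝ))) (nhds 1) := by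
    have h8 : Tendsto (fun _ : ℝ => (8:ℝ)) (nhdsWithin 1 (Set.Iio (1:ℝ))) (nhds 8) :=
      tendsto_const_nhds
    have := h8.div (hcont.mono_left nhdsWithin_le_nhds) (by norm_num : (8:ℝ) ≠ 0)
    norm_num at this
    exact this
  exact hlim.congr' (Filter.eventuallyEq_of_mem self_mem_nhdsWithin
    (fun y hy => (key y hy).symm))
end

section
/- For a Galton–Watson process (Y_n) with offspring distribution θ started from one individual, P_1(Y_r ≠ 0) = 8/((3+2r)^2 - 1), and consequently P_1(Y_r ≠ 0) ~ 2/r^2 as r → ∞. -/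
open MeasureTheory Filter

lemma gθ_iter_zero (r : ℕ) : gθ^[r] 0 = 1 - 8 / ((3 + 2 * (r : ℝ)) ^ 2 - 1) := by
  induction r with
  | zero => norm_num
  | succ n ih =>
    rw [Function.iterate_succ_apply', ih]
    unfold gθ
    have hc : (0:ℝ) < 3 + 2 * (n : ℝ) := by positivity
    set c : ℝ := 3 + 2 * (n : ℝ) with hcdef
    have hden : c ^ 2 - 1 ≠ 0 := by nlinarith
    have h1 : (9 - (1 - 8 / (c ^ 2 - 1))) / (1 - (1 - 8 / (c ^ 2 - 1))) = c ^ 2 := by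
      field_simp
      ring
    rw [h1, Real.sqrt_sq hc.le]
    push_cast
    rw [hcdef]
    ring_nf

theorem GW_survival
    {Ω : Type*} [MeasurableSpace Ω] (μ : Measure Ω) [IsProbabilityMeasure μ]
    (Y : ℕ → Ω → ℕ) (hY : ∀ n, Measurable (Y n))
    (hgen : ∀ r : ℕ, ∀ y ∈ Set.Ico (0 : ℝ) 1,
      ∫ ω, (y ^ (Y r ω) : ℝ) ∂μ = gθ^[r] y) :
    (∀ r : ℕ, 1 ≤ r →
      (μ {ω | Y r ω ≠ 0}).toReal = 8 / ((3 + 2 * (r : ℝ)) ^ 2 - 1)) ∧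
    Tendsto (fun r : ℕ => (μ {ω | Y r ω ≠ 0}).toReal * (r : ℝ) ^ 2 / 2)
      atTop (nhds 1) := by
  have key : ∀ r : ℕ, (μ {ω | Y r ω ≠ 0}).toReal = 8 / ((3 + 2 * (r : ℝ)) ^ 2 - 1) := by
    intro r
    have hgen0 := hgen r 0 (by simp)
    have hEq : (fun ω => ((0:ℝ) ^ (Y r ω))) =
        Set.indicator {ω | Y r ω = 0} (fun _ => (1:ℝ)) := by
      funext ω
      by_cases h : Y r ω = 0 <;> simp [h, Set.indicator]
    rw [hEq] at hgen0
    have hmeas : MeasurableSet {ω | Y r ω = 0} := (hY r) (measurableSet_singleton 0)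
    rw [integral_indicator_const (1:ℝ) hmeas, gθ_iter_zero] at hgen0
    simp at hgen0
    have hcompl : {ω | Y r ω ≠ 0} = {ω | Y r ω = 0}ᶜ := rfl
    rw [hcompl, measure_compl hmeas (measure_ne_top μ _), measure_univ,
      ENNReal.toReal_sub_of_le prob_le_one ENNReal.one_ne_top, ENNReal.toReal_one,
      (show (μ {ω | Y r ω = 0}).toReal = _ from hgen0)]
    ring
  constructor
  · intro r _; exact key r
  · have heq : ∀ᶠ r : ℕ in atTop,
        ((r:ℝ) / ((r:ℝ) + 1)) * ((r:ℝ) / ((r:ℝ) + 2)) =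
        (μ {ω | Y r ω ≠ 0}).toReal * (r : ℝ) ^ 2 / 2 := by
      filter_upwards [eventually_ge_atTop 1] with r hr
      rw [key r]
      have h1 : ((r:ℝ) + 1) ≠ 0 := by positivity
      have h2 : ((r:ℝ) + 2) ≠ 0 := by positivity
      have h3 : (3 + 2 * (r : ℝ)) ^ 2 - 1 ≠ 0 := by have := (Nat.cast_nonneg r : (0:ℝ) ≤ r); nlinarith
      have h4 : (3 + 2 * (r : ℝ)) ^ 2 - 1 = 4 * (((r:ℝ) + 1) * ((r:ℝ) + 2)) := by ring
      rw [h4]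
      field_simp
      ring
    have hlim : Tendsto (fun r : ℕ => ((r:ℝ) / ((r:ℝ) + 1)) * ((r:ℝ) / ((r:ℝ) + 2)))
        atTop (nhds 1) := by
      have := (tendsto_natCast_div_add_atTop (1:ℝ)).mul (tendsto_natCast_div_add_atTop (2:ℝ))
      simpa using this
    exact hlim.congr' heq
end

section
/- Let (Y_n) be the Galton–Watson process with offspring distribution θ started from one individual. The law of r^{-2} Y_r under P_1(· | Y_r ≠ 0) converges as r → ∞ to the distribution on (0,∞) with Laplace transform λ ↦ 1 - (1 + sqrt(2/λ))^{-2}. -/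
open MeasureTheory Filter

lemma GW_frac_pos {y : ℝ} (hy : y ∈ Set.Ico (0 : ℝ) 1) : 0 < (9 - y) / (1 - y) := by
  obtain ⟨h0, h1⟩ := hy
  apply div_pos <;> linarith

lemma GW_s_sq {y : ℝ} (hy : y ∈ Set.Ico (0 : ℝ) 1) :
    Real.sqrt ((9 - y) / (1 - y)) ^ 2 = (9 - y) / (1 - y) :=
  Real.sq_sqrt (GW_frac_pos hy).le

lemma GW_s_ge_three {y : ℝ} (hy : y ∈ Set.Ico (0 : ℝ) 1) :
    3 ≤ Real.sqrt ((9 - y) / (1 - y)) := by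
  obtain ⟨h0, h1⟩ := hy
  have h9 : (9 : ℝ) ≤ (9 - y) / (1 - y) := by
    rw [le_div_iff₀ (by linarith)]; nlinarith
  calc (3:ℝ) = Real.sqrt 9 := by
        rw [show (9:ℝ) = 3^2 by norm_num, Real.sqrt_sq]; norm_num
    _ ≤ _ := Real.sqrt_le_sqrt h9

lemma GW_iterate_formula (r : ℕ) {y : ℝ} (hy : y ∈ Set.Ico (0 : ℝ) 1) :
    gθ^[r] y = 1 - 8 / ((Real.sqrt ((9 - y) / (1 - y)) + 2 * r) ^ 2 - 1) := by
  induction r with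
  | zero =>
      have hs := GW_s_sq hy
      have h1 : (1:ℝ) - y > 0 := by linarith [hy.2]
      simp only [Function.iterate_zero, id_eq, Nat.cast_zero, mul_zero, add_zero, hs]
      have h8 : (9 - y) / (1 - y) - 1 = 8 / (1 - y) := by field_simp; ring
      rw [h8]
      field_simp
      ring
  | succ r ih =>
      set s := Real.sqrt ((9 - y) / (1 - y)) with hs_def
      have hs3 := GW_s_ge_three hy
      set t : ℝ := s + 2 * r with ht_def
      have ht3 : 3 ≤ t := by
        have : (0:ℝ) ≤ 2 * r := by positivity
        simp only [ht_def]; linarith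
      have ht1 : (0:ℝ) < t ^ 2 - 1 := by nlinarith
      set G : ℝ := 1 - 8 / (t ^ 2 - 1) with hG_def
      have h1G : 1 - G = 8 / (t ^ 2 - 1) := by simp [hG_def]
      have h1Gpos : 0 < 1 - G := by rw [h1G]; positivity
      have h9G : (9 - G) / (1 - G) = t ^ 2 := by
        rw [h1G]
        have : 9 - G = 8 * t ^ 2 / (t ^ 2 - 1) := by
          simp only [hG_def]; field_simp; ring
        rw [this]
        field_simp
      have hsG : Real.sqrt ((9 - G) / (1 - G)) = t := by
        rw [h9G, Real.sqrt_sq (by linarith)]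
      rw [Function.iterate_succ_apply', ih]
      simp only [gθ]
      rw [hsG]
      push_cast
      rw [ht_def]
      ring_nf

lemma GW_sq_nat_tendsto : Tendsto (fun r : ℕ => (r : ℝ) ^ 2) atTop atTop :=
  (tendsto_pow_atTop (by norm_num)).comp tendsto_natCast_atTop_atTop

lemma GW_inv_sq_tendsto (c : ℝ) :
    Tendsto (fun r : ℕ => c / (r : ℝ) ^ 2) atTop (nhds 0) :=
  Tendsto.div_atTop tendsto_const_nhds GW_sq_nat_tendsto

lemma GW_key_limit {lam : ℝ} (hlam : 0 < lam) :
    Tendsto (fun r : ℕ => (r : ℝ) ^ 2 * (1 - Real.exp (-lam / (r : ℝ) ^ 2)))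
      atTop (nhds lam) := by
  have hd : Tendsto (fun z : ℝ => (Real.exp z - 1) / z) (nhdsWithin 0 {0}ᶜ) (nhds 1) := by
    have h := Real.hasDerivAt_exp 0
    rw [hasDerivAt_iff_tendsto_slope] at h
    simp only [Real.exp_zero] at h
    refine h.congr (fun z => ?_)
    simp [slope_def_field, div_eq_inv_mul]
  have hu : Tendsto (fun r : ℕ => -lam / (r : ℝ) ^ 2) atTop (nhdsWithin 0 {0}ᶜ) := by
    rw [tendsto_nhdsWithin_iff]
    refine ⟨GW_inv_sq_tendsto _, ?_⟩
    filter_upwards [eventually_ge_atTop 1] with r hr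
    have hr2 : (0:ℝ) < (r:ℝ)^2 := by positivity
    simp only [Set.mem_compl_iff, Set.mem_singleton_iff]
    intro h
    rcases div_eq_zero_iff.mp h with h | h
    · linarith
    · nlinarith
  have hcomp := hd.comp hu
  have := hcomp.const_mul lam
  simp only [mul_one] at this
  refine this.congr' ?_
  filter_upwards [eventually_ge_atTop 1] with r hr
  have hr2 : (0:ℝ) < (r:ℝ)^2 := by
    have : (1:ℝ) ≤ r := by exact_mod_cast hr
    positivity
  simp only [Function.comp_apply]
  have hl : lam ≠ 0 := hlam.ne'
  have hlu : lam / (-lam / (r:ℝ)^2) = -(r:ℝ)^2 := by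
    rw [div_div_eq_mul_div, div_eq_iff (by simp [hl])]
    ring
  calc lam * ((Real.exp (-lam / (r:ℝ)^2) - 1) / (-lam / (r:ℝ)^2))
      = (Real.exp (-lam / (r:ℝ)^2) - 1) * (lam / (-lam / (r:ℝ)^2)) := by ring
    _ = (r:ℝ)^2 * (1 - Real.exp (-lam / (r:ℝ)^2)) := by rw [hlu]; ring

lemma GW_integral_if {Ω : Type*} [MeasurableSpace Ω] (μ : Measure Ω) [IsProbabilityMeasure μ]
    (X : Ω → ℕ) (hX : Measurable X) (y : ℝ) (hy : y ∈ Set.Ico (0:ℝ) 1) :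
    ∫ ω, (if X ω ≠ 0 then y ^ X ω else 0) ∂μ
      = (∫ ω, (y : ℝ) ^ X ω ∂μ) - ∫ ω, (0 : ℝ) ^ X ω ∂μ := by
  have hmy : Measurable fun ω => (y : ℝ) ^ X ω :=
    (measurable_from_top (f := fun n : ℕ => (y:ℝ) ^ n)).comp hX
  have hm0 : Measurable fun ω => (0 : ℝ) ^ X ω :=
    (measurable_from_top (f := fun n : ℕ => (0:ℝ) ^ n)).comp hX
  have hiy : Integrable (fun ω => (y : ℝ) ^ X ω) μ := by
    refine (integrable_const (1:ℝ)).mono' hmy.aestronglyMeasurable (ae_of_all _ fun ω => ?_)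
    rw [Real.norm_eq_abs, abs_of_nonneg (pow_nonneg hy.1 _)]
    exact pow_le_one₀ hy.1 hy.2.le
  have hi0 : Integrable (fun ω => (0 : ℝ) ^ X ω) μ := by
    refine (integrable_const (1:ℝ)).mono' hm0.aestronglyMeasurable (ae_of_all _ fun ω => ?_)
    rcases eq_or_ne (X ω) 0 with h | h
    · simp [h]
    · simp [zero_pow h]
  rw [← integral_sub hiy hi0]
  congr 1
  ext ω
  rcases eq_or_ne (X ω) 0 with h | h
  · simp [h]
  · simp [h, zero_pow h]

lemma GW_alg {t : ℝ} (ht : 3 ≤ t) {r : ℕ} (hr : 1 ≤ r) :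
    ((r:ℝ)^2/2) * (8 / ((t + 2*r)^2 - 1))
      = 4 / ((t * (1/(r:ℝ)) + 2)^2 - (1/(r:ℝ))^2) := by
  have hr1 : (1:ℝ) ≤ (r:ℝ) := by exact_mod_cast hr
  have hr0 : (r:ℝ) ≠ 0 := by linarith
  have hden : (0:ℝ) < (t + 2*r)^2 - 1 := by nlinarith
  have key : (t * (1/(r:ℝ)) + 2)^2 - (1/(r:ℝ))^2 = ((t + 2*r)^2 - 1)/(r:ℝ)^2 := by
    field_simp
  rw [key]
  rw [div_div_eq_mul_div]
  rw [eq_div_iff (by positivity)]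
  rw [mul_assoc, div_mul_cancel₀ _ hden.ne']
  ring

theorem GW_conditional_limit
    {Ω : Type*} [MeasurableSpace Ω] (μ : Measure Ω) [IsProbabilityMeasure μ]
    (Y : ℕ → Ω → ℕ) (hY : ∀ n, Measurable (Y n))
    (hgen : ∀ r : ℕ, ∀ y ∈ Set.Ico (0 : ℝ) 1,
      ∫ ω, (y ^ (Y r ω) : ℝ) ∂μ = gθ^[r] y) :
    ∀ lam : ℝ, 0 < lam →
      Tendsto (fun r : ℕ =>
          ((r : ℝ) ^ 2 / 2) *
            ∫ ω, (if Y r ω ≠ 0 then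
              Real.exp (-lam * (Y r ω : ℝ) / (r : ℝ) ^ 2) else 0) ∂μ)
        atTop (nhds (1 - (1 + Real.sqrt (2 / lam))⁻¹ ^ 2)) := by
  intro lam hlam
  set c : ℝ := Real.sqrt (2 / lam) with hc_def
  have hc0 : 0 ≤ c := Real.sqrt_nonneg _
  set y : ℕ → ℝ := fun r => Real.exp (-lam / (r:ℝ)^2) with hy_def
  set s : ℕ → ℝ := fun r => Real.sqrt ((9 - y r) / (1 - y r)) with hs_def
  have h0mem : (0:ℝ) ∈ Set.Ico (0:ℝ) 1 := by norm_num
  have hymem : ∀ r : ℕ, 1 ≤ r → y r ∈ Set.Ico (0:ℝ) 1 := by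
    intro r hr
    have hr1 : (1:ℝ) ≤ (r:ℝ) := by exact_mod_cast hr
    constructor
    · exact (Real.exp_pos _).le
    · apply Real.exp_lt_one_iff.mpr
      have : (0:ℝ) < (r:ℝ)^2 := by positivity
      have : -lam / (r:ℝ)^2 < 0 := div_neg_of_neg_of_pos (by linarith) this
      exact this
  have hs0 : Real.sqrt ((9 - (0:ℝ)) / (1 - (0:ℝ))) = 3 := by
    rw [show (9 - (0:ℝ)) / (1 - (0:ℝ)) = 3^2 by norm_num, Real.sqrt_sq]; norm_num
  have h1r : Tendsto (fun r : ℕ => 1/(r:ℝ)) atTop (nhds 0) :=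
    tendsto_one_div_atTop_nhds_zero_nat
  -- limit of s r / r
  have hsr : Tendsto (fun r : ℕ => s r * (1/(r:ℝ))) atTop (nhds (2*c)) := by
    have hnum : Tendsto (fun r : ℕ => 9 - y r) atTop (nhds 8) := by
      have : Tendsto (fun r : ℕ => y r) atTop (nhds 1) := by
        have := (Real.continuous_exp.tendsto 0).comp (GW_inv_sq_tendsto (-lam))
        simpa [hy_def, Real.exp_zero, Function.comp_def] using this
      have := this.const_sub 9
      norm_num at this
      exact this
    have hden : Tendsto (fun r : ℕ => (r:ℝ)^2 * (1 - y r)) atTop (nhds lam) :=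
      GW_key_limit hlam
    have hq : Tendsto (fun r : ℕ => (9 - y r) / ((r:ℝ)^2 * (1 - y r))) atTop
        (nhds (8 / lam)) := hnum.div hden hlam.ne'
    have hsq := (Real.continuous_sqrt.tendsto _).comp hq
    have hval : Real.sqrt (8 / lam) = 2 * c := by
      rw [show (8:ℝ)/lam = 4 * (2/lam) by ring, show (4:ℝ) = 2^2 by norm_num,
        Real.sqrt_mul (by positivity), Real.sqrt_sq (by norm_num)]
    rw [hval] at hsq
    refine hsq.congr' ?_
    filter_upwards [eventually_ge_atTop 1] with r hr
    have hr1 : (1:ℝ) ≤ (r:ℝ) := by exact_mod_cast hr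
    have hrpos : (0:ℝ) < (r:ℝ) := by linarith
    simp only [Function.comp_apply]
    rw [show (9 - y r) / ((r:ℝ)^2 * (1 - y r)) = ((9 - y r) / (1 - y r)) / (r:ℝ)^2 by
      rw [div_div]; ring_nf]
    rw [Real.sqrt_div' _ (sq_nonneg _), Real.sqrt_sq hrpos.le]
    simp only [hs_def]
    rw [div_eq_mul_inv, one_div]
  -- the limit of the explicit expression
  have hden1 : Tendsto (fun r : ℕ => (3 * (1/(r:ℝ)) + 2)^2 - (1/(r:ℝ))^2) atTop
      (nhds ((3 * 0 + 2)^2 - 0^2)) :=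
    (((h1r.const_mul 3).add_const 2).pow 2).sub (h1r.pow 2)
  have hden2 : Tendsto (fun r : ℕ => (s r * (1/(r:ℝ)) + 2)^2 - (1/(r:ℝ))^2) atTop
      (nhds ((2*c + 2)^2 - 0^2)) :=
    ((hsr.add_const 2).pow 2).sub (h1r.pow 2)
  have hne1 : ((3:ℝ) * 0 + 2)^2 - 0^2 ≠ 0 := by norm_num
  have hne2 : ((2*c + 2):ℝ)^2 - 0^2 ≠ 0 := by
    have : (0:ℝ) < 2*c + 2 := by linarith
    simp only [ne_eq]
    intro h; nlinarith
  have hE : Tendsto (fun r : ℕ =>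
      4 / ((3 * (1/(r:ℝ)) + 2)^2 - (1/(r:ℝ))^2)
        - 4 / ((s r * (1/(r:ℝ)) + 2)^2 - (1/(r:ℝ))^2)) atTop
      (nhds (4 / ((3 * 0 + 2)^2 - 0^2) - 4 / ((2*c + 2)^2 - 0^2))) :=
    (tendsto_const_nhds.div hden1 hne1).sub (tendsto_const_nhds.div hden2 hne2)
  have hvaleq : 4 / (((3:ℝ) * 0 + 2)^2 - 0^2) - 4 / ((2*c + 2)^2 - 0^2)
      = 1 - (1 + c)⁻¹ ^ 2 := by
    have h1c : (0:ℝ) < 1 + c := by linarith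
    rw [inv_pow]
    rw [eq_sub_iff_add_eq]
    field_simp
    ring
  rw [← hc_def] at *
  rw [← hvaleq]
  refine hE.congr' ?_
  filter_upwards [eventually_ge_atTop 1] with r hr
  have hymem' := hymem r hr
  have hs3 : 3 ≤ s r := GW_s_ge_three hymem'
  -- rewrite the integrand
  have hint : (fun ω => if Y r ω ≠ 0 then
      Real.exp (-lam * (Y r ω : ℝ) / (r : ℝ) ^ 2) else 0)
      = fun ω => if Y r ω ≠ 0 then (y r) ^ (Y r ω) else 0 := by
    funext ω
    rcases eq_or_ne (Y r ω) 0 with h | h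
    · simp [h]
    · simp only [h, ne_eq, not_false_iff, if_true]
      rw [hy_def]
      rw [← Real.exp_nat_mul]
      congr 1
      ring
  have hsplit := GW_integral_if μ (Y r) (hY r) (y r) hymem'
  have hg1 := hgen r (y r) hymem'
  have hg0 := hgen r 0 h0mem
  have hiter1 := GW_iterate_formula r hymem'
  have hiter0 := GW_iterate_formula r h0mem
  rw [hs0] at hiter0
  have hexpr : ((r : ℝ) ^ 2 / 2) *
      ∫ ω, (if Y r ω ≠ 0 then
        Real.exp (-lam * (Y r ω : ℝ) / (r : ℝ) ^ 2) else 0) ∂μ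
      = ((r:ℝ)^2/2) * (8 / ((3 + 2*(r:ℝ))^2 - 1))
        - ((r:ℝ)^2/2) * (8 / ((s r + 2*(r:ℝ))^2 - 1)) := by
    rw [hint, hsplit, hg1, hg0, hiter1, hiter0]
    simp only [hs_def]
    ring
  rw [hexpr, GW_alg (le_refl 3) hr, GW_alg hs3 hr]
end

section
/- Define π(x) = sqrt((9-x)/(1-x)) - 3 for 0 ≤ x < 1. Then for every y in (0,1), π(g_θ(y)) - π(g_θ(0)) = π(y), where g_θ(y) = 1 - 8/((sqrt((9-y)/(1-y)) + 2)^2 - 1). -/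
noncomputable def piFn : ℝ → ℝ := fun x => Real.sqrt ((9 - x) / (1 - x)) - 3

lemma key_pi_g (y : ℝ) (hy0 : 0 ≤ y) (hy1 : y < 1) :
    piFn (gθ y) = Real.sqrt ((9 - y) / (1 - y)) - 1 := by
  set s := Real.sqrt ((9 - y) / (1 - y)) with hs
  have h1 : (0:ℝ) < 1 - y := by linarith
  have hnn : 0 ≤ (9 - y) / (1 - y) := by
    apply div_nonneg <;> linarith
  have hsq : s ^ 2 = (9 - y) / (1 - y) := Real.sq_sqrt hnn
  have hs3 : 3 ≤ s := by
    have h9 : (9:ℝ) ≤ (9 - y) / (1 - y) := by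
      rw [le_div_iff₀ h1]; nlinarith
    calc (3:ℝ) = Real.sqrt 9 := by
          rw [show (9:ℝ) = 3 ^ 2 by norm_num, Real.sqrt_sq (by norm_num)]
      _ ≤ s := Real.sqrt_le_sqrt h9
  have hD : (s + 2) ^ 2 - 1 ≠ 0 := by nlinarith
  have hg : gθ y = 1 - 8 / ((s + 2) ^ 2 - 1) := rfl
  have hratio : (9 - gθ y) / (1 - gθ y) = (s + 2) ^ 2 := by
    rw [hg]
    field_simp
    ring
  unfold piFn
  rw [hratio, Real.sqrt_sq (by linarith)]; ring

theorem stationary_identity :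
    ∀ y ∈ Set.Ioo (0 : ℝ) 1, piFn (gθ y) - piFn (gθ 0) = piFn y := by
  intro y hy
  obtain ⟨hy0, hy1⟩ := hy
  rw [key_pi_g y hy0.le hy1, key_pi_g 0 le_rfl one_pos]
  have h0 : Real.sqrt ((9 - 0) / (1 - 0)) = 3 := by
    norm_num
  rw [h0]
  unfold piFn
  ring
end

section
/- Integrating the generating function identity: for 0 ≤ x < 1, Σ_{p≥1} (κ_p/p) x^p = (48/√π) · (sqrt((18-x)/(3(2-x))) - √3), where the κ_p are defined by Σ_{p≥1} κ_p y^p = (128√3/√π) · y/sqrt((18-y)(2-y)^3). -/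
open Real Set

private lemma hasDerivAt_G {t : ℝ} (ht : t < 2) :
    HasDerivAt (fun y : ℝ => (48 / Real.sqrt Real.pi) *
        (Real.sqrt ((18 - y) / (3 * (2 - y))) - Real.sqrt 3))
      (128 * Real.sqrt 3 / Real.sqrt Real.pi / Real.sqrt ((18 - t) * (2 - t) ^ 3)) t := by
  have hd : (0:ℝ) < 2 - t := by linarith
  have ha : (0:ℝ) < 18 - t := by linarith
  have hu : HasDerivAt (fun y : ℝ => (18 - y) / (3 * (2 - y)))
      (16 / (3 * (2 - t) ^ 2)) t := by
    have h1 : HasDerivAt (fun y : ℝ => 18 - y) (-1) t := by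
      simpa using (hasDerivAt_id t).const_sub 18
    have h2 : HasDerivAt (fun y : ℝ => 3 * (2 - y)) (-3) t := by
      have := ((hasDerivAt_id t).const_sub 2).const_mul (3:ℝ)
      simpa using this
    have h3 := h1.div h2 (by positivity)
    refine h3.congr_deriv ?_
    field_simp
    ring
  have hut : (0:ℝ) < (18 - t) / (3 * (2 - t)) := by positivity
  have hs := hu.sqrt (ne_of_gt hut)
  have hfin := (hs.sub_const (Real.sqrt 3)).const_mul (48 / Real.sqrt Real.pi)
  refine hfin.congr_deriv ?_
  have e1 : Real.sqrt ((18 - t) / (3 * (2 - t)))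
      = Real.sqrt (18 - t) / (Real.sqrt 3 * Real.sqrt (2 - t)) := by
    rw [Real.sqrt_div ha.le, Real.sqrt_mul (by norm_num : (0:ℝ) ≤ 3)]
  have e2 : Real.sqrt ((18 - t) * (2 - t) ^ 3)
      = Real.sqrt (18 - t) * ((2 - t) * Real.sqrt (2 - t)) := by
    rw [Real.sqrt_mul ha.le, pow_succ, Real.sqrt_mul (by positivity), Real.sqrt_sq hd.le]
  rw [e1, e2]
  have h3 : (0:ℝ) < Real.sqrt 3 := by positivity
  have hsa : (0:ℝ) < Real.sqrt (18 - t) := Real.sqrt_pos.2 ha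
  have hsd : (0:ℝ) < Real.sqrt (2 - t) := Real.sqrt_pos.2 hd
  have hπ : (0:ℝ) < Real.sqrt Real.pi := Real.sqrt_pos.2 Real.pi_pos
  have e3 : Real.sqrt 3 * Real.sqrt 3 = 3 := Real.mul_self_sqrt (by norm_num)
  have ed : Real.sqrt (2 - t) * Real.sqrt (2 - t) = 2 - t := Real.mul_self_sqrt hd.le
  field_simp
  ring_nf
  rw [Real.sq_sqrt hd.le]
  ring

theorem kappa_integrated (κ : ℕ → ℝ)
    (hκ : ∀ y ∈ Set.Ico (0 : ℝ) 2,
      HasSum (fun p : ℕ => κ (p + 1) * y ^ (p + 1))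
        ((128 * Real.sqrt 3 / Real.sqrt Real.pi) *
          y / Real.sqrt ((18 - y) * (2 - y) ^ 3))) :
    ∀ x ∈ Set.Ico (0 : ℝ) 1,
      HasSum (fun p : ℕ => κ (p + 1) / (p + 1 : ℝ) * x ^ (p + 1))
        ((48 / Real.sqrt Real.pi) *
          (Real.sqrt ((18 - x) / (3 * (2 - x))) - Real.sqrt 3)) := by
  -- boundedness of coefficients
  have habs : Summable (fun n : ℕ => |κ (n + 1) * (3/2 : ℝ) ^ (n + 1)|) :=
    (hκ (3/2) (by constructor <;> norm_num)).summable.abs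
  set C : ℝ := ∑' n : ℕ, |κ (n + 1) * (3/2 : ℝ) ^ (n + 1)| with hCdef
  have hC : ∀ n : ℕ, |κ (n + 1)| * (3/2 : ℝ) ^ (n + 1) ≤ C := by
    intro n
    have h1 : |κ (n + 1)| * (3/2 : ℝ) ^ (n + 1) = |κ (n + 1) * (3/2 : ℝ) ^ (n + 1)| := by
      rw [abs_mul, abs_of_pos (by positivity : (0:ℝ) < (3/2:ℝ) ^ (n+1))]
    rw [h1]
    exact Summable.le_tsum habs n (fun m _ => abs_nonneg _)
  have hC0 : 0 ≤ C := tsum_nonneg (fun n => abs_nonneg _)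
  have key : ∀ (n : ℕ) (t : ℝ), |t| ≤ 5/4 → ‖κ (n + 1) * t ^ n‖ ≤ C * (5/6 : ℝ) ^ n := by
    intro n t htb
    have hgeom : ((3/2 : ℝ) ^ (n + 1)) * ((5/6 : ℝ) ^ n * (2/3)) = (5/4 : ℝ) ^ n := by
      have h := mul_pow (3/2 : ℝ) (5/6) n
      norm_num at h ⊢
      rw [pow_succ]
      nlinarith [h]
    calc ‖κ (n + 1) * t ^ n‖ = |κ (n + 1)| * |t| ^ n := by
            rw [Real.norm_eq_abs, abs_mul, abs_pow]
      _ ≤ |κ (n + 1)| * (5/4 : ℝ) ^ n := by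
            gcongr
      _ = (|κ (n + 1)| * (3/2 : ℝ) ^ (n + 1)) * ((5/6 : ℝ) ^ n * (2/3)) := by
            rw [mul_assoc, hgeom]
      _ ≤ C * ((5/6 : ℝ) ^ n * (2/3)) := by
            have := hC n
            nlinarith [pow_nonneg (by norm_num : (0:ℝ) ≤ 5/6) n]
      _ ≤ C * (5/6 : ℝ) ^ n := by
            nlinarith [pow_nonneg (by norm_num : (0:ℝ) ≤ 5/6) n, hC0]
  have husum : Summable (fun n : ℕ => C * (5/6 : ℝ) ^ n) :=
    (summable_geometric_of_lt_one (by norm_num) (by norm_num)).mul_left C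
  -- termwise differentiation
  have hderivF : ∀ t ∈ Ioo (-(5/4) : ℝ) (5/4),
      HasDerivAt (fun z : ℝ => ∑' n : ℕ, κ (n + 1) / (n + 1 : ℝ) * z ^ (n + 1))
        (∑' n : ℕ, κ (n + 1) * t ^ n) t := by
    intro t ht
    refine hasDerivAt_tsum_of_isPreconnected husum isOpen_Ioo
      (convex_Ioo _ _).isPreconnected
      (g := fun (n : ℕ) (z : ℝ) => κ (n + 1) / (n + 1 : ℝ) * z ^ (n + 1))
      (g' := fun (n : ℕ) (z : ℝ) => κ (n + 1) * z ^ n)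
      (y₀ := 0) ?_ ?_ (by constructor <;> norm_num) ?_ ht
    · intro n y _
      have h1 : HasDerivAt (fun z : ℝ => z ^ (n + 1)) ((n + 1 : ℝ) * y ^ n) y := by
        simpa using hasDerivAt_pow (n + 1) y
      have h2 := h1.const_mul (κ (n + 1) / (n + 1 : ℝ))
      refine h2.congr_deriv ?_
      field_simp
    · intro n y hy
      have hyb : |y| ≤ 5/4 := by
        rw [abs_le]; exact ⟨hy.1.le, hy.2.le⟩
      exact key n y hyb
    · apply summable_of_ne_finset_zero (s := ∅)
      intro n _
      simp
  -- sum of derivative series equals the closed form on (0,1)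
  have hΦ : ∀ t ∈ Ioo (0:ℝ) 1, (∑' n : ℕ, κ (n + 1) * t ^ n)
      = 128 * Real.sqrt 3 / Real.sqrt Real.pi / Real.sqrt ((18 - t) * (2 - t) ^ 3) := by
    intro t ht
    have ht0 : t ≠ 0 := ne_of_gt ht.1
    have h := (hκ t ⟨ht.1.le, by linarith [ht.2]⟩).div_const t
    have hB : (0:ℝ) < Real.sqrt ((18 - t) * (2 - t) ^ 3) := by
      apply Real.sqrt_pos.2
      have h1 : (0:ℝ) < 18 - t := by linarith [ht.2]
      have h2 : (0:ℝ) < 2 - t := by linarith [ht.2]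
      positivity
    have e1 : (fun n : ℕ => κ (n + 1) * t ^ (n + 1) / t) = fun n : ℕ => κ (n + 1) * t ^ n := by
      funext n
      rw [pow_succ]
      field_simp
    have e2 : ∀ (A B : ℝ), A * t / B / t = A / B := by
      intro A B
      rcases eq_or_ne B 0 with hB0 | hB0
      · simp [hB0]
      · field_simp
    rw [e1, e2] at h
    exact h.tsum_eq
  intro x hx
  obtain ⟨hx0, hx1⟩ := hx
  -- summability of the integrated series at x
  have hsumx : Summable (fun n : ℕ => κ (n + 1) / (n + 1 : ℝ) * x ^ (n + 1)) := by
    apply Summable.of_norm_bounded (g := fun n => C * (5/6 : ℝ) ^ n * (5/4)) (husum.mul_right _)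
    intro n
    have hb := key n x (by rw [abs_of_nonneg hx0]; linarith)
    rw [Real.norm_eq_abs] at hb ⊢
    have h1 : |κ (n + 1) / (n + 1 : ℝ) * x ^ (n + 1)|
        = |κ (n + 1)| / (n + 1 : ℝ) * x ^ (n + 1) := by
      rw [abs_mul, abs_div, abs_pow, abs_of_nonneg hx0]
      congr 2
      exact abs_of_pos (by positivity)
    have h2 : |κ (n + 1) * x ^ n| = |κ (n + 1)| * x ^ n := by
      rw [abs_mul, abs_pow, abs_of_nonneg hx0]
    rw [h1]
    rw [h2] at hb
    have hxn : (0:ℝ) ≤ x ^ n := by positivity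
    have hdiv : |κ (n + 1)| / (n + 1 : ℝ) ≤ |κ (n + 1)| :=
      div_le_self (abs_nonneg _) (by exact_mod_cast Nat.le_add_left 1 n)
    calc |κ (n + 1)| / (n + 1 : ℝ) * x ^ (n + 1)
        ≤ |κ (n + 1)| * x ^ (n + 1) := by gcongr
      _ = |κ (n + 1)| * x ^ n * x := by rw [pow_succ]; ring
      _ ≤ C * (5/6 : ℝ) ^ n * (5/4) := by
          apply mul_le_mul hb (by linarith) hx0
          positivity
  rcases eq_or_lt_of_le hx0 with h0 | hxpos
  · -- x = 0
    have e1 : (48 / Real.sqrt Real.pi) *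
        (Real.sqrt ((18 - x) / (3 * (2 - x))) - Real.sqrt 3) = 0 := by
      rw [← h0]
      norm_num
    rw [e1]
    have e2 : (fun n : ℕ => κ (n + 1) / (n + 1 : ℝ) * x ^ (n + 1)) = fun _ => (0:ℝ) := by
      funext n
      rw [← h0]
      simp
    rw [e2]
    exact hasSum_zero
  · -- 0 < x : show the tsum equals the closed form via MVT-style constancy
    set F : ℝ → ℝ := fun z => ∑' n : ℕ, κ (n + 1) / (n + 1 : ℝ) * z ^ (n + 1) with hFdef
    set G : ℝ → ℝ := fun z => (48 / Real.sqrt Real.pi) *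
        (Real.sqrt ((18 - z) / (3 * (2 - z))) - Real.sqrt 3) with hGdef
    have hmem : ∀ t ∈ Icc (0:ℝ) x, t ∈ Ioo (-(5/4) : ℝ) (5/4) := by
      intro t ht
      exact ⟨by linarith [ht.1], by linarith [ht.2, hx1]⟩
    have hFG : ∀ t ∈ Ioo (0:ℝ) x, HasDerivAt (fun z => F z - G z) 0 t := by
      intro t ht
      have ht' : t ∈ Ioo (-(5/4) : ℝ) (5/4) := ⟨by linarith [ht.1], by linarith [ht.2, hx1]⟩
      have h1 := hderivF t ht'
      have h2 := hasDerivAt_G (t := t) (by linarith [ht.2, hx1])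
      have h3 := h1.sub h2
      rw [hΦ t ⟨ht.1, by linarith [ht.2]⟩, sub_self] at h3
      exact h3
    have hcont : ContinuousOn (fun z => F z - G z) (Icc 0 x) := by
      intro t ht
      exact (((hderivF t (hmem t ht)).differentiableAt.sub
        (hasDerivAt_G (t := t) (by linarith [ht.2, hx1])).differentiableAt).continuousAt).continuousWithinAt
    have hdiff : DifferentiableOn ℝ (fun z => F z - G z) (interior (Icc 0 x)) := by
      rw [interior_Icc]
      exact fun t ht => ((hFG t ht).differentiableAt).differentiableWithinAt
    have hderiv0 : ∀ t ∈ interior (Icc 0 x), deriv (fun z => F z - G z) t = 0 := by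
      rw [interior_Icc]
      exact fun t ht => (hFG t ht).deriv
    have hmono := monotoneOn_of_deriv_nonneg (convex_Icc 0 x) hcont hdiff
      (fun t ht => (hderiv0 t ht).ge)
    have hanti := antitoneOn_of_deriv_nonpos (convex_Icc 0 x) hcont hdiff
      (fun t ht => (hderiv0 t ht).le)
    have h0x : (0:ℝ) ∈ Icc (0:ℝ) x := ⟨le_rfl, hxpos.le⟩
    have hxx : x ∈ Icc (0:ℝ) x := ⟨hxpos.le, le_rfl⟩
    have heq : F x - G x = F 0 - G 0 :=
      le_antisymm (hanti h0x hxx hxpos.le) (hmono h0x hxx hxpos.le)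
    have hF0 : F 0 = 0 := by
      rw [hFdef]
      simp
    have hG0 : G 0 = 0 := by
      rw [hGdef]
      norm_num
    have hFx : F x = G x := by
      rw [hF0, hG0] at heq
      linarith
    have hfin := hsumx.hasSum
    rw [show (∑' n : ℕ, κ (n + 1) / (n + 1 : ℝ) * x ^ (n + 1)) = F x from rfl, hFx] at hfin
    exact hfin
end
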